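/- For every finite set A of propositional atoms and every propositional knowledge base K over A, there exist vectors (a ↦ v_a) ∈ R^l (l = |mod(K)|, assuming K consistent; dimension may be arbitrary if K is inconsistent) such that for all nonempty {a₁,…,aₙ} ⊆ A and all b ∈ A: v_b ⪯ max(v_{a₁},…,v_{aₙ}) if and only if K ⊨ a₁∧…∧aₙ → b, where max is componentwise and ⪯ is the componentwise (product) order. -/

import Mathlib

/-!
Enumerate the models `ω₁, …, ω_l` of `K` and put `(v_a)ᵢ = 0` if `ωᵢ ⊨ a` and `1` otherwise.
In coordinate `i` the maximum `max(v_{a₁}, …, v_{aₙ})ᵢ` is `0` exactly when `ωᵢ` satisfies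
every `aⱼ`, so `(v_b)ᵢ ≤ max(v_{a₁}, …, v_{aₙ})ᵢ` says that `ωᵢ ⊨ a₁ ∧ … ∧ aₙ → b`.
Quantifying over all coordinates quantifies over all models of `K`.
-/

/-- Propositional formulas over a set of atoms `A`. -/
inductive PropForm (A : Type) : Type
  | atom : A → PropForm A
  | fals : PropForm A
  | impl : PropForm A → PropForm A → PropForm A

/-- Truth value of a formula under an interpretation `ω`. -/
def PropForm.eval {A : Type} (ω : A → Bool) : PropForm A → Bool
  | .atom a => ω a
  | .fals => false
  | .impl φ ψ => !(φ.eval ω) || ψ.eval ω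

/-- The set `mod(K)` of models of a propositional knowledge base `K`. -/
def models {A : Type} [Fintype A] [DecidableEq A] (K : Finset (PropForm A)) :
    Finset (A → Bool) :=
  Finset.univ.filter (fun ω => ∀ φ ∈ K, φ.eval ω = true)

/-- `K ⊨ a₁ ∧ ... ∧ aₙ → b`, where the `aᵢ` are the elements of `S`. -/
def entails {A : Type} [Fintype A] [DecidableEq A] (K : Finset (PropForm A))
    (S : Finset A) (b : A) : Prop :=
  ∀ ω ∈ models K, (∀ a ∈ S, ω a = true) → ω b = true

section OrderEmbedding

variable {A α : Type*}

theorem ite_le_sup'_ite_iff [LinearOrder α] {lo hi : α} (h : lo < hi) (ω : A → Bool)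
    {S : Finset A} (hS : S.Nonempty) (b : A) :
    (if ω b then lo else hi) ≤ S.sup' hS (fun a => if ω a then lo else hi) ↔
      ((∀ a ∈ S, ω a = true) → ω b = true) := by
  have lo_le : ∀ a, lo ≤ if ω a then lo else hi := fun a => by split <;> simp [h.le]
  have hi_le_iff : ∀ a, (hi ≤ if ω a then lo else hi) ↔ ω a = false := fun a => by
    cases ω a <;> simp [h.not_ge]
  rw [Finset.le_sup'_iff]
  cases hb : ω b
  · simp [hi_le_iff]
  · obtain ⟨a, ha⟩ := hS
    exact iff_of_true ⟨a, ha, by simpa using lo_le a⟩ fun _ => rfl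

noncomputable def atomEmbedding (W : Finset (A → Bool)) (a : A) : Fin W.card → ℝ :=
  fun i => if (W.equivFin.symm i : A → Bool) a then 0 else 1

theorem atomEmbedding_le_sup'_iff (W : Finset (A → Bool)) {S : Finset A} (hS : S.Nonempty)
    (b : A) :
    (∀ i, atomEmbedding W b i ≤ S.sup' hS (fun a => atomEmbedding W a i)) ↔
      ∀ ω ∈ W, (∀ a ∈ S, ω a = true) → ω b = true := by
  simp only [atomEmbedding, ite_le_sup'_ite_iff zero_lt_one _ hS]
  exact (W.equivFin.symm.forall_congr_right
    (q := fun ω : W => (∀ a ∈ S, (ω : A → Bool) a = true) → (ω : A → Bool) b = true)).trans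
    Subtype.forall

end OrderEmbedding

/-- Order embeddings can simulate any propositional knowledge base `K`: there
exist vectors (in `ℝ^l` with `l = |mod(K)|` when `K` is consistent, of arbitrary
dimension otherwise) such that `v_b ⪯ max(v_{a₁},...,v_{aₙ})` iff
`K ⊨ a₁∧...∧aₙ → b`. -/
theorem stmt_10 {A : Type} [Fintype A] [DecidableEq A] (K : Finset (PropForm A)) :
    ∃ (mdim : ℕ) (v : A → Fin mdim → ℝ),
      ((models K).Nonempty → mdim = (models K).card) ∧
      ∀ (S : Finset A) (hS : S.Nonempty), ∀ b : A,
        (∀ i, v b i ≤ S.sup' hS (fun a => v a i)) ↔ entails K S b :=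
  ⟨(models K).card, atomEmbedding (models K), fun _ => rfl,
    fun _ hS b => atomEmbedding_le_sup'_iff (models K) hS b⟩
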